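/- For fixed γ ∈ ℝ, the function (a, b) ↦ log(Φ(b − γ) − Φ(a − γ)) is concave on the region {(a,b) : a < b} ⊂ ℝ². -/

import Mathlib

/-!
On a segment the function is `s ↦ log F s` with `F s = Φ (Y s) - Φ (X s)` for affine `X < Y`,
so it suffices that `F'' F ≤ F'²`. This holds for any antiderivative `Φ` of a positive
log-concave `φ`, written as `φ' = -ψ φ` with `ψ` monotone (`ψ t = t` for the normal density).
Monotonicity of `ψ` gives, for `x ≤ y`, `ψ x (Φ y - Φ x) ≤ φ x - φ y ≤ ψ y (Φ y - Φ x)`: the mean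
of `ψ` under `φ` restricted to `[x, y]` lies in `[ψ x, ψ y]`. These two bounds make
`F'² - F'' F` a nonnegative combination of squares.
-/

open Real MeasureTheory

/-- Standard normal density. -/
noncomputable def normalPDF (t : ℝ) : ℝ := (Real.sqrt (2 * Real.pi))⁻¹ * Real.exp (-t ^ 2 / 2)

/-- Standard normal CDF `Φ`. -/
noncomputable def normalCDF (t : ℝ) : ℝ := ∫ s in Set.Iic t, normalPDF s

open Set AffineMap

theorem concaveOn_of_concaveOn_lineMap {𝕜 E β : Type*} [Field 𝕜] [LinearOrder 𝕜]
    [IsStrictOrderedRing 𝕜] [AddCommGroup E] [Module 𝕜 E] [AddCommMonoid β] [PartialOrder β]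
    [SMul 𝕜 β] {s : Set E} {f : E → β} (hs : Convex 𝕜 s)
    (h : ∀ p ∈ s, ∀ q ∈ s, ConcaveOn 𝕜 (Icc (0 : 𝕜) 1) (f ∘ lineMap p q)) : ConcaveOn 𝕜 s f := by
  refine ⟨hs, fun p hp q hq a b ha hb hab => ?_⟩
  have := (h p hp q hq).2 (left_mem_Icc.2 zero_le_one) (right_mem_Icc.2 zero_le_one) ha hb hab
  simp only [Function.comp_apply, lineMap_apply_zero, lineMap_apply_one, smul_eq_mul, mul_zero,
    mul_one, zero_add] at this
  rwa [lineMap_apply_module, ← eq_sub_of_add_eq hab] at this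

theorem convex_setOf_fst_lt_snd : Convex ℝ {p : ℝ × ℝ | p.1 < p.2} := by
  simpa [sub_neg] using convex_halfSpace_lt (LinearMap.fst ℝ ℝ ℝ - LinearMap.snd ℝ ℝ ℝ).isLinear 0

-- The right side minus the left side is
-- `dx² u (u - v - p P) + dy² v (q P - u + v) + u v (dx - dy)²`.
theorem sq_mul_sub_mul_le_sq {u v P p q dx dy : ℝ} (hu : 0 ≤ u) (hv : 0 ≤ v)
    (hp : p * P ≤ u - v) (hq : u - v ≤ q * P) :
    (dx ^ 2 * p * u - dy ^ 2 * q * v) * P ≤ (dy * v - dx * u) ^ 2 := by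
  nlinarith [mul_nonneg (mul_nonneg (sq_nonneg dx) hu) (sub_nonneg.2 hp),
    mul_nonneg (mul_nonneg (sq_nonneg dy) hv) (sub_nonneg.2 hq),
    mul_nonneg (mul_nonneg hu hv) (sq_nonneg (dx - dy))]

section

variable {Φ φ ψ : ℝ → ℝ}

theorem mul_sub_le_sub_of_monotone (hΦ : ∀ t, HasDerivAt Φ (φ t) t)
    (hφ : ∀ t, HasDerivAt φ (-ψ t * φ t) t) (hψ : Monotone ψ) (hφ_nonneg : ∀ t, 0 ≤ φ t)
    {x y : ℝ} (hxy : x ≤ y) : ψ x * (Φ y - Φ x) ≤ φ x - φ y := by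
  have hg (t : ℝ) : HasDerivAt (fun u => ψ x * Φ u + φ u) ((ψ x - ψ t) * φ t) t :=
    (((hΦ t).const_mul _).add (hφ t)).congr_deriv (by ring)
  have := antitoneOn_of_hasDerivWithinAt_nonpos (convex_Icc x y)
    (fun t _ => (hg t).continuousAt.continuousWithinAt) (fun t _ => (hg t).hasDerivWithinAt)
    (fun t ht => mul_nonpos_of_nonpos_of_nonneg
      (sub_nonpos.2 (hψ (interior_subset ht).1)) (hφ_nonneg t))
    (left_mem_Icc.2 hxy) (right_mem_Icc.2 hxy) hxy
  linarith

theorem sub_le_mul_sub_of_monotone (hΦ : ∀ t, HasDerivAt Φ (φ t) t)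
    (hφ : ∀ t, HasDerivAt φ (-ψ t * φ t) t) (hψ : Monotone ψ) (hφ_nonneg : ∀ t, 0 ≤ φ t)
    {x y : ℝ} (hxy : x ≤ y) : φ x - φ y ≤ ψ y * (Φ y - Φ x) := by
  have hg (t : ℝ) : HasDerivAt (fun u => ψ y * Φ u + φ u) ((ψ y - ψ t) * φ t) t :=
    (((hΦ t).const_mul _).add (hφ t)).congr_deriv (by ring)
  have := monotoneOn_of_hasDerivWithinAt_nonneg (convex_Icc x y)
    (fun t _ => (hg t).continuousAt.continuousWithinAt) (fun t _ => (hg t).hasDerivWithinAt)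
    (fun t ht => mul_nonneg (sub_nonneg.2 (hψ (interior_subset ht).2)) (hφ_nonneg t))
    (left_mem_Icc.2 hxy) (right_mem_Icc.2 hxy) hxy
  linarith

theorem concaveOn_log_sub_comp_lineMap (hΦ : ∀ t, HasDerivAt Φ (φ t) t)
    (hφ : ∀ t, HasDerivAt φ (-ψ t * φ t) t) (hψ : Monotone ψ) (hφ_pos : ∀ t, 0 < φ t)
    {D : Set ℝ} (hD : Convex ℝ D) {a a' b b' : ℝ}
    (hlt : ∀ s ∈ D, lineMap a a' s < lineMap b b' s) :
    ConcaveOn ℝ D (fun s => log (Φ (lineMap b b' s) - Φ (lineMap a a' s))) := by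
  set X := (lineMap a a' : ℝ →ᵃ[ℝ] ℝ)
  set Y := (lineMap b b' : ℝ →ᵃ[ℝ] ℝ)
  have hX (s : ℝ) : HasDerivAt X (a' - a) s := hasDerivAt_lineMap
  have hY (s : ℝ) : HasDerivAt Y (b' - b) s := hasDerivAt_lineMap
  have hF (s : ℝ) : HasDerivAt (fun s => Φ (Y s) - Φ (X s))
      (φ (Y s) * (b' - b) - φ (X s) * (a' - a)) s :=
    ((hΦ _).comp s (hY s)).sub ((hΦ _).comp s (hX s))
  have hF' (s : ℝ) : HasDerivAt (fun s => φ (Y s) * (b' - b) - φ (X s) * (a' - a))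
      (-ψ (Y s) * φ (Y s) * (b' - b) * (b' - b) - -ψ (X s) * φ (X s) * (a' - a) * (a' - a)) s :=
    (((hφ _).comp s (hY s)).mul_const _).sub (((hφ _).comp s (hX s)).mul_const _)
  have hF_pos (s : ℝ) (hs : s ∈ D) : 0 < Φ (Y s) - Φ (X s) :=
    sub_pos.2 (strictMono_of_hasDerivAt_pos hΦ hφ_pos (hlt s hs))
  refine concaveOn_of_hasDerivWithinAt2_nonpos hD
    (fun s hs => ((hF s).log (hF_pos s hs).ne').continuousAt.continuousWithinAt)
    (fun s hs => ((hF s).log (hF_pos s (interior_subset hs)).ne').hasDerivWithinAt)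
    (fun s hs => ((hF' s).div (hF s) (hF_pos s (interior_subset hs)).ne').hasDerivWithinAt)
    (fun s hs => div_nonpos_of_nonpos_of_nonneg ?_ (sq_nonneg _))
  have hXY := (hlt s (interior_subset hs)).le
  have := sq_mul_sub_mul_le_sq (dx := a' - a) (dy := b' - b) (hφ_pos _).le (hφ_pos _).le
    (mul_sub_le_sub_of_monotone hΦ hφ hψ (fun t => (hφ_pos t).le) hXY)
    (sub_le_mul_sub_of_monotone hΦ hφ hψ (fun t => (hφ_pos t).le) hXY)
  linear_combination this

theorem concaveOn_log_sub_of_hasDerivAt (hΦ : ∀ t, HasDerivAt Φ (φ t) t)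
    (hφ : ∀ t, HasDerivAt φ (-ψ t * φ t) t) (hψ : Monotone ψ) (hφ_pos : ∀ t, 0 < φ t) :
    ConcaveOn ℝ {p : ℝ × ℝ | p.1 < p.2} (fun p => log (Φ p.2 - Φ p.1)) := by
  refine concaveOn_of_concaveOn_lineMap convex_setOf_fst_lt_snd fun p hp q hq => ?_
  simp only [Function.comp_def, fst_lineMap, snd_lineMap]
  refine concaveOn_log_sub_comp_lineMap hΦ hφ hψ hφ_pos (convex_Icc 0 1) fun s hs => ?_
  simpa only [mem_ofPred_eq, fst_lineMap, snd_lineMap] using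
    convex_setOf_fst_lt_snd.lineMap_mem hp hq hs

end

theorem normalPDF_pos (t : ℝ) : 0 < normalPDF t := by
  unfold normalPDF
  positivity

theorem integrable_normalPDF : Integrable normalPDF := by
  convert (integrable_exp_neg_mul_sq (b := 1 / 2) (by norm_num)).const_mul (√(2 * π))⁻¹
    using 3
  unfold normalPDF
  ring_nf

theorem hasDerivAt_normalPDF (t : ℝ) : HasDerivAt normalPDF (-t * normalPDF t) t := by
  have h : HasDerivAt (fun u : ℝ => -u ^ 2 / 2) (-t) t :=
    ((hasDerivAt_pow 2 t).neg.div_const 2).congr_deriv (by push_cast; ring)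
  unfold normalPDF
  exact (h.exp.const_mul _).congr_deriv (by ring)

theorem hasDerivAt_normalCDF (t : ℝ) : HasDerivAt normalCDF (normalPDF t) t := by
  have hcont : Continuous normalPDF := by unfold normalPDF; fun_prop
  have h_eq : normalCDF = fun u => normalCDF 0 + ∫ s in (0 : ℝ)..u, normalPDF s := by
    ext u
    rw [← intervalIntegral.integral_Iic_sub_Iic integrable_normalPDF.integrableOn
      integrable_normalPDF.integrableOn, normalCDF, normalCDF]
    ring
  rw [h_eq]
  exact ((hcont.integral_hasStrictDerivAt 0 t).hasDerivAt).const_add _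

/-- For fixed `γ`, the function `(a, b) ↦ log(Φ(b − γ) − Φ(a − γ))` is concave
on the region `{(a,b) : a < b} ⊂ ℝ²`. -/
theorem log_prob_concave_in_limits (γ : ℝ) :
    ConcaveOn ℝ {p : ℝ × ℝ | p.1 < p.2}
      (fun p : ℝ × ℝ => Real.log (normalCDF (p.2 - γ) - normalCDF (p.1 - γ))) :=
  concaveOn_log_sub_of_hasDerivAt (ψ := fun t => t - γ)
    (fun t => (hasDerivAt_normalCDF _).comp_sub_const t γ)
    (fun t => (hasDerivAt_normalPDF _).comp_sub_const t γ)
    (fun _ _ h => sub_le_sub_right h γ) (fun t => normalPDF_pos (t - γ))
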